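/- For every integer n ≥ 2, the independence number of the edge-clique graph of the cocktail party graph satisfies α(K_e(cp(n))) = 4. -/

import Mathlib

/-!
Two edges of `cp(n)` lie in a common clique unless one of them contains the partner of an
endpoint of the other. Let `S` be independent in `K_e(cp(n))`. Two edges of `S` through a vertex
`v` are `s(v, x)` and `s(v, x')` with `x'` the partner of `x`, so every further edge of `S` must
contain the partner of `v`; in particular each vertex lies on at most two edges of `S`, and a
vertex on two of them gives `|S| ≤ 2 + 2`. If instead every vertex lies on at most one edge of
`S`, all edges of `S` meet a fixed `s(u, w) ∈ S` at the partner of `u` or of `w`, so `|S| ≤ 3`.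
Conversely the four edges between two fixed pairs are pairwise in conflict.
-/

namespace ECG

/-- The edge-clique graph `K_e(G)`: its vertices are the edges of `G`, and two distinct
edges are adjacent exactly when all their endpoints are pairwise adjacent in `G`
(i.e. the two edges lie in a common clique of `G`). -/
def edgeCliqueGraph {V : Type*} (G : SimpleGraph V) : SimpleGraph G.edgeSet where
  Adj e f := e ≠ f ∧ G.IsClique {v | v ∈ (e : Sym2 V) ∨ v ∈ (f : Sym2 V)}
  symm := by
    refine ⟨?_⟩
    rintro e f ⟨hne, hcl⟩
    refine ⟨hne.symm, ?_⟩
    have h : {v | v ∈ (f : Sym2 V) ∨ v ∈ (e : Sym2 V)} =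
        {v | v ∈ (e : Sym2 V) ∨ v ∈ (f : Sym2 V)} := by
      ext v; exact or_comm
    rw [h]; exact hcl
  loopless := ⟨fun e h => h.1 rfl⟩

/-- A set of vertices is independent when no two of its members are adjacent. -/
def IsIndepSet {V : Type*} (G : SimpleGraph V) (S : Set V) : Prop :=
  S.Pairwise fun a b => ¬ G.Adj a b

/-- The independence number `α(G)`: the maximum cardinality of an independent set. -/
noncomputable def indepNum {V : Type*} (G : SimpleGraph V) : ℕ :=
  sSup {n | ∃ S : Finset V, IsIndepSet G ↑S ∧ S.card = n}

end ECG

namespace ECG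

/-- The cocktail party graph `cp(n)`: the complement of a perfect matching on `2n`
vertices. The vertices come in `n` pairs (indexed by `Fin n`), and two distinct
vertices are adjacent exactly when they do not belong to the same pair. -/
def cocktailParty (n : ℕ) : SimpleGraph (Fin n × Fin 2) where
  Adj a b := a.1 ≠ b.1
  symm := ⟨fun _ _ h => h.symm⟩
  loopless := ⟨fun _ h => h rfl⟩

end ECG

namespace ECG

open Finset

section EdgeClique

variable {V : Type*} {G : SimpleGraph V}

lemma edgeCliqueGraph_adj_iff {e f : G.edgeSet} :
    (edgeCliqueGraph G).Adj e f ↔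
      e ≠ f ∧ ∀ a ∈ (e : Sym2 V), ∀ b ∈ (f : Sym2 V), a ≠ b → G.Adj a b := by
  have adj_of_mem {d : G.edgeSet} {a b : V} (ha : a ∈ (d : Sym2 V)) (hb : b ∈ (d : Sym2 V))
      (hab : a ≠ b) : G.Adj a b :=
    G.adj_of_mem_incidenceSet hab ⟨d.2, ha⟩ ⟨d.2, hb⟩
  refine and_congr_right fun _ => ⟨fun h a ha b hb => h (Or.inl ha) (Or.inr hb), ?_⟩
  rintro h a (ha | ha) b (hb | hb) hab
  · exact adj_of_mem ha hb hab
  · exact h a ha b hb hab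
  · exact (h b hb a ha hab.symm).symm
  · exact adj_of_mem ha hb hab

end EdgeClique

namespace cocktailParty

variable {n : ℕ}

def partner (v : Fin n × Fin 2) : Fin n × Fin 2 := (v.1, v.2.rev)

@[simp]
lemma partner_partner (v : Fin n × Fin 2) : partner (partner v) = v := by
  simp [partner]

lemma partner_ne (v : Fin n × Fin 2) : partner v ≠ v := fun h => by
  have rev_ne : ∀ a : Fin 2, a.rev ≠ a := by decide
  exact rev_ne v.2 (congrArg Prod.snd h)

lemma not_adj_partner (v : Fin n × Fin 2) : ¬ (cocktailParty n).Adj v (partner v) :=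
  fun h => h rfl

lemma eq_partner_of_not_adj {v w : Fin n × Fin 2} (hvw : v ≠ w)
    (h : ¬ (cocktailParty n).Adj v w) : w = partner v := by
  have hcol : v.1 = w.1 := not_not.mp h
  have hrow : v.2 ≠ w.2 := fun hrow => hvw (Prod.ext hcol hrow)
  have eq_rev : ∀ a b : Fin 2, a ≠ b → b = a.rev := by decide
  exact Prod.ext hcol.symm (eq_rev _ _ hrow)

lemma partner_notMem_of_mem {e : (cocktailParty n).edgeSet} {v : Fin n × Fin 2}
    (hv : v ∈ e.1) : partner v ∉ e.1 := fun hpv =>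
  not_adj_partner v <|
    (cocktailParty n).adj_of_mem_incidenceSet (partner_ne v).symm ⟨e.2, hv⟩ ⟨e.2, hpv⟩

lemma not_adj_edgeCliqueGraph_iff {e f : (cocktailParty n).edgeSet} (hef : e ≠ f) :
    ¬ (edgeCliqueGraph (cocktailParty n)).Adj e f ↔
      ∃ a ∈ e.1, partner a ∈ f.1 := by
  simp only [edgeCliqueGraph_adj_iff, ne_eq, hef, not_false_eq_true, true_and]
  push Not
  constructor
  · rintro ⟨a, ha, b, hb, hab, hnadj⟩
    exact ⟨a, ha, eq_partner_of_not_adj hab hnadj ▸ hb⟩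
  · rintro ⟨a, ha, hpa⟩
    exact ⟨a, ha, partner a, hpa, (partner_ne a).symm, not_adj_partner a⟩

section IndepSet

variable {S : Set (cocktailParty n).edgeSet}
  (hS : IsIndepSet (edgeCliqueGraph (cocktailParty n)) S)
include hS

lemma exists_partner_mem_of_isIndepSet {e f : (cocktailParty n).edgeSet} (he : e ∈ S)
    (hf : f ∈ S) (hef : e ≠ f) : ∃ a ∈ e.1, partner a ∈ f.1 :=
  (not_adj_edgeCliqueGraph_iff hef).1 (hS he hf hef)

lemma eq_partner_of_isIndepSet {f g : (cocktailParty n).edgeSet} (hf : f ∈ S) (hg : g ∈ S)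
    (hfg : f ≠ g) {v x y : Fin n × Fin 2} (hfv : f.1 = s(v, x))
    (hgv : g.1 = s(v, y)) : y = partner x := by
  obtain ⟨a, ha, hpa⟩ := exists_partner_mem_of_isIndepSet hS hf hg hfg
  have hvf : v ∈ f.1 := hfv ▸ Sym2.mem_mk_left v x
  have hvg : v ∈ g.1 := hgv ▸ Sym2.mem_mk_left v y
  rw [hfv, Sym2.mem_iff] at ha
  rcases ha with rfl | rfl
  · exact absurd hpa (partner_notMem_of_mem hvg)
  · rw [hgv, Sym2.mem_iff] at hpa
    rcases hpa with hav | hay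
    · exact absurd (hav ▸ hvf) (partner_notMem_of_mem (hfv ▸ Sym2.mem_mk_right v a))
    · exact hay.symm

lemma partner_mem_of_isIndepSet {f g h : (cocktailParty n).edgeSet} (hf : f ∈ S) (hg : g ∈ S)
    (hh : h ∈ S) (hfg : f ≠ g) (hfh : f ≠ h) (hgh : g ≠ h) {v : Fin n × Fin 2}
    (hvf : v ∈ f.1) (hvg : v ∈ g.1) : partner v ∈ h.1 := by
  obtain ⟨x, hx⟩ := Sym2.mem_iff_exists.mp hvf
  obtain ⟨y, hy⟩ := Sym2.mem_iff_exists.mp hvg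
  have hyx : y = partner x := eq_partner_of_isIndepSet hS hf hg hfg hx hy
  -- `h` meets `f` and `g`; avoiding `partner v`, it would have to contain `x` and `partner x`.
  obtain ⟨a, ha, hpa⟩ := exists_partner_mem_of_isIndepSet hS hf hh hfh
  obtain ⟨b, hb, hpb⟩ := exists_partner_mem_of_isIndepSet hS hg hh hgh
  rw [hx, Sym2.mem_iff] at ha
  rw [hy, hyx, Sym2.mem_iff] at hb
  rcases ha with rfl | rfl
  · exact hpa
  rcases hb with rfl | rfl
  · exact hpb
  · rw [partner_partner] at hpb
    exact absurd hpa (partner_notMem_of_mem hpb)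

end IndepSet

lemma card_filter_mem_le_two {S : Finset (cocktailParty n).edgeSet}
    (hS : IsIndepSet (edgeCliqueGraph (cocktailParty n)) S) (v : Fin n × Fin 2) :
    #{e ∈ S | v ∈ e.1} ≤ 2 := by
  by_contra! hlt
  obtain ⟨f, g, h, hf, hg, hh, hfg, hfh, hgh⟩ := two_lt_card_iff.1 hlt
  simp only [mem_filter] at hf hg hh
  exact partner_notMem_of_mem hh.2
    (partner_mem_of_isIndepSet hS hf.1 hg.1 hh.1 hfg hfh hgh hf.2 hg.2)

lemma card_le_four {S : Finset (cocktailParty n).edgeSet}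
    (hS : IsIndepSet (edgeCliqueGraph (cocktailParty n)) S) : #S ≤ 4 := by
  by_cases hdeg : ∃ v f g, f ∈ S ∧ g ∈ S ∧ f ≠ g ∧ v ∈ f.1 ∧ v ∈ g.1
  · obtain ⟨v, f, g, hf, hg, hfg, hvf, hvg⟩ := hdeg
    have hsub : S ⊆ insert f (insert g {e ∈ S | partner v ∈ e.1}) := by
      intro h hh
      rcases eq_or_ne f h with rfl | hfh
      · exact mem_insert_self _ _
      rcases eq_or_ne g h with rfl | hgh
      · exact mem_insert_of_mem (mem_insert_self _ _)
      exact mem_insert_of_mem <| mem_insert_of_mem <| mem_filter.2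
        ⟨hh, partner_mem_of_isIndepSet hS hf hg hh hfg hfh hgh hvf hvg⟩
    calc #S ≤ #(insert f (insert g {e ∈ S | partner v ∈ e.1})) := card_le_card hsub
      _ ≤ #{e ∈ S | partner v ∈ e.1} + 1 + 1 :=
        (card_insert_le _ _).trans (Nat.add_le_add_right (card_insert_le _ _) 1)
      _ ≤ 4 := by linarith [card_filter_mem_le_two hS (partner v)]
  · push Not at hdeg
    have hdeg_le_one (v : Fin n × Fin 2) : #{e ∈ S | v ∈ e.1} ≤ 1 := by
      refine card_le_one.2 fun f hf g hg => by_contra fun hfg => ?_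
      simp only [mem_filter] at hf hg
      exact hdeg v f g hf.1 hg.1 hfg hf.2 hg.2
    rcases S.eq_empty_or_nonempty with rfl | ⟨e, he⟩
    · simp
    obtain ⟨u, w, huw⟩ : ∃ u w, e.1 = s(u, w) := Sym2.exists.1 ⟨e.1, rfl⟩
    have hsub : S ⊆ insert e ({f ∈ S | partner u ∈ f.1} ∪ {f ∈ S | partner w ∈ f.1}) := by
      intro h hh
      rcases eq_or_ne e h with rfl | heh
      · exact mem_insert_self _ _
      obtain ⟨a, ha, hpa⟩ := exists_partner_mem_of_isIndepSet hS he hh heh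
      rw [huw, Sym2.mem_iff] at ha
      refine mem_insert_of_mem (mem_union.2 ?_)
      rcases ha with rfl | rfl
      · exact Or.inl (mem_filter.2 ⟨hh, hpa⟩)
      · exact Or.inr (mem_filter.2 ⟨hh, hpa⟩)
    calc #S ≤ #(insert e ({f ∈ S | partner u ∈ f.1} ∪ {f ∈ S | partner w ∈ f.1})) :=
          card_le_card hsub
      _ ≤ #{f ∈ S | partner u ∈ f.1} + #{f ∈ S | partner w ∈ f.1} + 1 :=
        (card_insert_le _ _).trans (Nat.add_le_add_right (card_union_le _ _) 1)
      _ ≤ 4 := by linarith [hdeg_le_one (partner u), hdeg_le_one (partner w)]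

def crossEdge {i j : Fin n} (hij : i ≠ j) (ab : Fin 2 × Fin 2) : (cocktailParty n).edgeSet :=
  ⟨s((i, ab.1), (j, ab.2)), hij⟩

lemma crossEdge_injective {i j : Fin n} (hij : i ≠ j) : Function.Injective (crossEdge hij) := by
  rintro ⟨a, b⟩ ⟨a', b'⟩ h
  simpa [crossEdge, hij] using congrArg Subtype.val h

lemma card_image_crossEdge {i j : Fin n} (hij : i ≠ j) : #(univ.image (crossEdge hij)) = 4 := by
  simp [card_image_of_injective _ (crossEdge_injective hij)]

lemma isIndepSet_image_crossEdge {i j : Fin n} (hij : i ≠ j) :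
    IsIndepSet (edgeCliqueGraph (cocktailParty n)) (univ.image (crossEdge hij) : Set _) := by
  rw [coe_image, coe_univ, Set.image_univ]
  rintro _ ⟨⟨a, b⟩, rfl⟩ _ ⟨⟨a', b'⟩, rfl⟩ hne
  rw [not_adj_edgeCliqueGraph_iff hne]
  have same_column {k : Fin n} {c c' : Fin 2} (hc : c ≠ c') : (k, c') = partner (k, c) :=
    eq_partner_of_not_adj (by simpa using hc) fun h => h rfl
  rcases eq_or_ne a a' with rfl | ha
  · have hb : b ≠ b' := by rintro rfl; exact hne rfl
    exact ⟨(j, b), Sym2.mem_mk_right _ _, same_column hb ▸ Sym2.mem_mk_right _ _⟩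
  · exact ⟨(i, a), Sym2.mem_mk_left _ _, same_column ha ▸ Sym2.mem_mk_left _ _⟩

end cocktailParty

end ECG

/-- For every integer `n ≥ 2`, the independence number of the edge-clique
graph of the cocktail party graph `cp(n)` equals 4. -/
theorem indepNum_edgeCliqueGraph_cocktailParty (n : ℕ) (hn : 2 ≤ n) :
    ECG.indepNum (ECG.edgeCliqueGraph (ECG.cocktailParty n)) = 4 := by
  obtain ⟨i, j, hij⟩ := (Fin.nontrivial_iff_two_le.2 hn).exists_pair_ne
  refine IsGreatest.csSup_eq ⟨?_, ?_⟩
  · exact ⟨_, ECG.cocktailParty.isIndepSet_image_crossEdge hij,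
      ECG.cocktailParty.card_image_crossEdge hij⟩
  · rintro m ⟨S, hS, rfl⟩
    exact ECG.cocktailParty.card_le_four hS
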